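/- arXiv:2502.15988 — 5 statements merged into one kernel-verified Lean document; each statement's English description precedes it below -/
import Mathlib

section
/- Fix a real number d ≥ 1. Suppose x : ℝ → ℝ is a function such that for all sufficiently large k one has 0 ≤ x(k) ≤ d − 1 and ((d − x(k)) − 1/log k)·k^{2·x(k)+1} = k^{d}. Then x(k) → (d − 1)/2 as k → ∞. -/
theorem stmt_2 (d : ℝ) (hd : 1 ≤ d) (x : ℝ → ℝ)
    (hx : ∀ᶠ k in Filter.atTop, 0 ≤ x k ∧ x k ≤ d - 1 ∧
      ((d - x k) - 1 / Real.log k) * k ^ (2 * x k + 1) = k ^ d) :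
    Filter.Tendsto x Filter.atTop (nhds ((d - 1) / 2)) := by
  have hlog : Filter.Tendsto Real.log Filter.atTop Filter.atTop :=
    Real.tendsto_log_atTop
  have hM : Filter.Tendsto (fun k : ℝ => (Real.log 2 + Real.log d) / (2 * Real.log k))
      Filter.atTop (nhds 0) :=
    Filter.Tendsto.div_atTop tendsto_const_nhds (hlog.const_mul_atTop two_pos)
  have key : ∀ᶠ k in Filter.atTop,
      ‖x k - (d - 1) / 2‖ ≤ (Real.log 2 + Real.log d) / (2 * Real.log k) := by
    filter_upwards [hx, Filter.eventually_gt_atTop 0, hlog.eventually_ge_atTop 2]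
      with k hk hk0 hlk
    obtain ⟨hx0, hx1, heq⟩ := hk
    have hlkpos : 0 < Real.log k := by linarith
    set c : ℝ := (d - x k) - 1 / Real.log k with hc
    have h1 : 1 / Real.log k ≤ 1 / 2 := by
      rw [div_le_div_iff₀ hlkpos two_pos]; linarith
    have h2 : 0 < 1 / Real.log k := by positivity
    have hc_lb : (1 : ℝ) / 2 ≤ c := by
      have : 1 ≤ d - x k := by linarith
      simp only [hc]; linarith
    have hc_ub : c ≤ d := by simp only [hc]; linarith
    have hcpos : 0 < c := lt_of_lt_of_le (by norm_num) hc_lb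
    have hkpow_pos : 0 < (k : ℝ) ^ (2 * x k + 1) := Real.rpow_pos_of_pos hk0 _
    have hceq : c = k ^ (d - (2 * x k + 1)) := by
      rw [Real.rpow_sub hk0, eq_div_iff (ne_of_gt hkpow_pos)]
      exact heq
    have hlogc : Real.log c = (d - (2 * x k + 1)) * Real.log k := by
      rw [hceq, Real.log_rpow hk0]
    have hx_eq : x k - (d - 1) / 2 = -Real.log c / (2 * Real.log k) := by
      field_simp
      linarith [hlogc]
    have habs : |Real.log c| ≤ Real.log 2 + Real.log d := by
      have hl1 : Real.log c ≤ Real.log d := Real.log_le_log hcpos hc_ub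
      have hl2 : Real.log (1 / 2) ≤ Real.log c := Real.log_le_log (by norm_num) hc_lb
      have hl3 : Real.log (1 / 2 : ℝ) = -Real.log 2 := by
        rw [Real.log_div one_ne_zero (by norm_num), Real.log_one]; ring
      have hld : 0 ≤ Real.log d := Real.log_nonneg hd
      have hl2' : 0 ≤ Real.log 2 := Real.log_nonneg (by norm_num)
      rw [abs_le]; constructor <;> linarith [hl3 ▸ hl2]
    rw [hx_eq]
    rw [norm_div, Real.norm_eq_abs, Real.norm_eq_abs, abs_neg]
    have h2lk : |2 * Real.log k| = 2 * Real.log k := abs_of_pos (by linarith)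
    rw [h2lk]
    exact div_le_div_of_nonneg_right habs (by linarith) |>.trans_eq rfl
  have hsq := squeeze_zero_norm' key hM
  have : Filter.Tendsto (fun k => x k - (d - 1) / 2 + (d - 1) / 2) Filter.atTop
      (nhds (0 + (d - 1) / 2)) := hsq.add_const _
  simpa using this
end

section
/- Fix an integer d ≥ 2. Suppose x : ℝ → ℝ is a function such that for all sufficiently large k one has 0 ≤ x(k) ≤ d − 1 and k^{2·x(k) − d + 1} = Γ(x(k)+1) / (Γ(d − x(k) + 1)·(d − x(k))), where Γ denotes the real Gamma function. Then x(k) → (d − 1)/2 as k → ∞. -/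
open Real Filter

theorem stmt_6 (d : ℕ) (hd : 2 ≤ d) (x : ℝ → ℝ)
    (hx : ∀ᶠ k in Filter.atTop, 0 ≤ x k ∧ x k ≤ (d : ℝ) - 1 ∧
      k ^ (2 * x k - d + 1) =
        Real.Gamma (x k + 1) / (Real.Gamma ((d : ℝ) - x k + 1) * ((d : ℝ) - x k))) :
    Filter.Tendsto x Filter.atTop (nhds (((d : ℝ) - 1) / 2)) := by
  have hd2 : (2:ℝ) ≤ (d:ℝ) := by exact_mod_cast hd
  -- continuity of Gamma on [1, d+1]
  have hcont : ContinuousOn Real.Gamma (Set.Icc 1 ((d:ℝ)+1)) := by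
    intro t ht
    refine (Real.differentiableAt_Gamma ?_).continuousAt.continuousWithinAt
    intro m
    have : (1:ℝ) ≤ t := ht.1
    intro h; rw [h] at this; push_cast at this; nlinarith [Nat.cast_nonneg (α := ℝ) m]
  have hK : IsCompact (Set.Icc (1:ℝ) ((d:ℝ)+1)) := isCompact_Icc
  have hne : (Set.Icc (1:ℝ) ((d:ℝ)+1)).Nonempty := ⟨1, by constructor <;> linarith⟩
  obtain ⟨a, ha, hmin⟩ := hK.exists_isMinOn hne hcont
  obtain ⟨b, hb, hmax⟩ := hK.exists_isMaxOn hne hcont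
  set m := Real.Gamma a with hm
  set M := Real.Gamma b with hM
  have hm0 : 0 < m := Real.Gamma_pos_of_pos (by linarith [ha.1])
  have hM0 : 0 < M := Real.Gamma_pos_of_pos (by linarith [hb.1])
  set C : ℝ := max |Real.log (m / (M * d))| |Real.log (M / m)| with hC
  -- key bound
  have key : ∀ᶠ k in atTop, |2 * x k - (d:ℝ) + 1| ≤ C / Real.log k := by
    filter_upwards [hx, eventually_gt_atTop (3:ℝ)] with k ⟨h0, h1, heq⟩ hk3
    have hk0 : (0:ℝ) < k := by linarith
    have hlogk : 1 < Real.log k := by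
      have := Real.log_lt_log (by norm_num) hk3
      have h3 : (1:ℝ) < Real.log 3 := by
        rw [Real.lt_log_iff_exp_lt (by norm_num)]
        calc Real.exp 1 < 2.7182818286 := Real.exp_one_lt_d9
          _ < 3 := by norm_num
      linarith
    -- bounds on x pieces
    have hx1 : x k + 1 ∈ Set.Icc (1:ℝ) ((d:ℝ)+1) := ⟨by linarith, by linarith⟩
    have hdx : (1:ℝ) ≤ (d:ℝ) - x k := by linarith
    have hdx' : (d:ℝ) - x k ≤ d := by linarith
    have hx2 : (d:ℝ) - x k + 1 ∈ Set.Icc (1:ℝ) ((d:ℝ)+1) := ⟨by linarith, by linarith⟩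
    have hg1 : m ≤ Real.Gamma (x k + 1) := hmin hx1
    have hg1' : Real.Gamma (x k + 1) ≤ M := hmax hx1
    have hg2 : m ≤ Real.Gamma ((d:ℝ) - x k + 1) := hmin hx2
    have hg2' : Real.Gamma ((d:ℝ) - x k + 1) ≤ M := hmax hx2
    set R : ℝ := Real.Gamma (x k + 1) / (Real.Gamma ((d:ℝ) - x k + 1) * ((d:ℝ) - x k)) with hR
    have hden : 0 < Real.Gamma ((d:ℝ) - x k + 1) * ((d:ℝ) - x k) := by nlinarith
    have hR0 : 0 < R := div_pos (by linarith) hden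
    have hRlo : m / (M * (d:ℝ)) ≤ R := by
      apply div_le_div₀ (by linarith) hg1 hden
      nlinarith
    have hRhi : R ≤ M / m := by
      apply div_le_div₀ hM0.le hg1' hm0
      nlinarith
    -- take logs of the equation
    have hlog : (2 * x k - (d:ℝ) + 1) * Real.log k = Real.log R := by
      rw [← heq, Real.log_rpow hk0]
    have hlb : Real.log (m / (M * d)) ≤ Real.log R :=
      Real.log_le_log (div_pos hm0 (by nlinarith)) hRlo
    have hub : Real.log R ≤ Real.log (M / m) :=
      Real.log_le_log hR0 hRhi
    have habs : |Real.log R| ≤ C := by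
      rw [abs_le]
      constructor
      · calc -C ≤ -|Real.log (m / (M * d))| := by
              simp [hC]
          _ ≤ Real.log (m / (M * d)) := neg_abs_le _
          _ ≤ _ := hlb
      · exact hub.trans ((le_abs_self _).trans (le_max_right _ _))
    rw [le_div_iff₀ (by linarith), ← abs_of_pos (show (0:ℝ) < Real.log k by linarith),
      ← abs_mul, hlog]
    exact habs
  have hC0 : Tendsto (fun k => C / Real.log k) atTop (nhds 0) :=
    tendsto_const_nhds.div_atTop Real.tendsto_log_atTop
  have h2 : Tendsto (fun k => 2 * x k - (d:ℝ) + 1) atTop (nhds 0) := by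
    apply squeeze_zero_norm' _ hC0
    simpa using key
  have := ((h2.add (tendsto_const_nhds (x := (d:ℝ) - 1))).div_const 2)
  convert this using 2 with k
  · ring
  · ring
end

section
/- Let d ≥ 3 and m be natural numbers with 0 ≤ m ≤ d − 1. If 2m ≤ d then m! < (d − m)!·(d − m), and if 2m > d then m! > (d − m)!·(d − m). -/
theorem stmt_7 (d m : ℕ) (hd : 3 ≤ d) (hm : m ≤ d - 1) :
    (2 * m ≤ d → m.factorial < (d - m).factorial * (d - m)) ∧
    (d < 2 * m → (d - m).factorial * (d - m) < m.factorial) := by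
  constructor
  · intro h
    have h1 : m ≤ d - m := by omega
    have h2 : 2 ≤ d - m := by omega
    calc m.factorial ≤ (d - m).factorial := Nat.factorial_le h1
      _ = (d - m).factorial * 1 := (mul_one _).symm
      _ < (d - m).factorial * (d - m) :=
        Nat.mul_lt_mul_of_le_of_lt (le_refl _) (by omega) (Nat.factorial_pos _)
  · intro h
    have h1 : d - m + 1 ≤ m := by omega
    calc (d - m).factorial * (d - m) < (d - m).factorial * (d - m + 1) :=
          Nat.mul_lt_mul_of_le_of_lt (le_refl _) (by omega) (Nat.factorial_pos _)
      _ = (d - m + 1).factorial := by rw [Nat.factorial_succ]; ring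
      _ ≤ m.factorial := Nat.factorial_le h1
end

section
/- Let c ≥ 0 and k ≥ 1 be real numbers, and let T : ℕ → ℕ → ℝ be a function satisfying: (i) T(n, 1) ≤ c·n for every n ∈ ℕ; and (ii) for every n ∈ ℕ and every integer d ≥ 2, there exist n₁, n₂ ∈ ℕ with n₁ + n₂ = n and T(n, d) ≤ T(n₁, d−1) + T(n₂, d−1) + c·n·k + c·n·k²·d. Then T(n, d) ≤ c·n·k²·d² for every n ∈ ℕ and every integer d ≥ 1. -/
theorem stmt_9 (c k : ℝ) (hc : 0 ≤ c) (hk : 1 ≤ k) (T : ℕ → ℕ → ℝ)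
    (h1 : ∀ n : ℕ, T n 1 ≤ c * n)
    (h2 : ∀ n : ℕ, ∀ d : ℕ, 2 ≤ d → ∃ n₁ n₂ : ℕ, n₁ + n₂ = n ∧
      T n d ≤ T n₁ (d - 1) + T n₂ (d - 1) + c * n * k + c * n * k ^ 2 * d) :
    ∀ n d : ℕ, 1 ≤ d → T n d ≤ c * n * k ^ 2 * d ^ 2 := by
  intro n d hd
  induction d, hd using Nat.le_induction generalizing n with
  | base =>
    have := h1 n
    have hn : (0:ℝ) ≤ (n:ℝ) := Nat.cast_nonneg n
    have hk2 : (1:ℝ) ≤ k ^ 2 := by nlinarith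
    push_cast
    nlinarith [mul_nonneg (mul_nonneg hc hn) (by linarith : (0:ℝ) ≤ k ^ 2 - 1)]
  | succ d hd ih =>
    obtain ⟨n₁, n₂, hsum, hT⟩ := h2 n (d + 1) (by omega)
    simp only [Nat.add_sub_cancel] at hT
    have ih1 := ih n₁
    have ih2 := ih n₂
    have hn : (n₁:ℝ) + n₂ = n := by exact_mod_cast congrArg (Nat.cast : ℕ → ℝ) hsum
    have hd' : (1:ℝ) ≤ d := by exact_mod_cast hd
    have hn1 : (0:ℝ) ≤ (n₁:ℝ) := Nat.cast_nonneg _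
    have hn2 : (0:ℝ) ≤ (n₂:ℝ) := Nat.cast_nonneg _
    have hk2 : (1:ℝ) ≤ k ^ 2 := by nlinarith
    have hkey : (0:ℝ) ≤ k ^ 2 * d - k := by nlinarith
    have hnsum : c * (n₁:ℝ) * k ^ 2 * (d:ℝ) ^ 2 + c * (n₂:ℝ) * k ^ 2 * (d:ℝ) ^ 2
        = c * (n:ℝ) * k ^ 2 * (d:ℝ) ^ 2 := by rw [← hn]; ring
    push_cast at hT ⊢
    nlinarith [mul_nonneg (mul_nonneg hc (Nat.cast_nonneg n : (0:ℝ) ≤ n)) hkey]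
end

section
/- Let d ≥ 2 be an integer and ε ∈ [0, 1]. Consider the joint distribution of (X, C) where X is uniform on {0,1}^{2d}, C is an independent Bernoulli(ε) bit, and the label is Y = Majority(X_{d+1}, …, X_{2d}) if C = 1 and Y = X₁ ⊕ Majority(X₂, …, X_d) if C = 0, where Majority(b₁,…,b_m) = 1 iff at least half of the bits are 1. Then: (a) the function f(x) = x₁ ⊕ Majority(x₂, …, x_d) satisfies P(f(X) = Y) ≥ 1 − ε; and (b) every function g : {0,1}^{2d} → {0,1} that depends only on the coordinates x_{d+1}, …, x_{2d} satisfies P(g(X) = Y) = (1 − ε)/2 + ε·P(g(X) = Majority(X_{d+1}, …, X_{2d})) ≤ 1/2 + ε/2. -/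
/-- Majority vote over the coordinates in `S`: `1` iff at least half of those bits are `1`. -/
def majOn {n : ℕ} (S : Finset (Fin n)) (x : Fin n → Bool) : Bool :=
  decide (S.card ≤ 2 * (S.filter fun i => x i = true).card)

/-- Probability (over `X` uniform on `{0,1}^{2d}` and an independent Bernoulli(ε) bit `C`)
that the classifier `g` agrees with the label
`Y = Majority(X_{d+1},…,X_{2d})` if `C = 1`, and
`Y = X₁ ⊕ Majority(X₂,…,X_d)` if `C = 0`. -/
noncomputable def accSPLIT (d : ℕ) (hd : 1 ≤ d) (ε : ℝ)
    (g : (Fin (2 * d) → Bool) → Bool) : ℝ :=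
  (1 / 2 ^ (2 * d)) * ∑ x : Fin (2 * d) → Bool,
    ((1 - ε) * (if g x = xor (x ⟨0, by omega⟩)
          (majOn (Finset.univ.filter fun i : Fin (2 * d) => 1 ≤ i.val ∧ i.val ≤ d - 1) x)
        then (1 : ℝ) else 0)
      + ε * (if g x = majOn (Finset.univ.filter fun i : Fin (2 * d) => d ≤ i.val) x
        then (1 : ℝ) else 0))

/-!
The accuracy is `(1 - ε)` times the agreement with the parity label `x₁ ⊕ Majority(x₂,…,x_d)`
plus `ε` times the agreement with `Majority(x_{d+1},…,x_{2d})`, and the parity label agrees with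
itself everywhere. Flipping `x₁` is an involution of the cube that fixes any `g` blind to the
first `d` coordinates but negates the parity label, so it swaps the inputs where `g` matches the
parity label with those where it does not: `g` agrees with it on exactly half of the cube.
-/

open Finset Function

theorem two_mul_card_agree_of_involutive {α : Type*} [Fintype α] {σ : α → α}
    (hσ : Involutive σ) {f g : α → Bool} (hg : ∀ x, g (σ x) = g x) (hf : ∀ x, f (σ x) = !f x) :
    2 * #{x | g x = f x} = Fintype.card α := by
  have hswap : #{x | g x = f x} = #{x | ¬g x = f x} := by
    refine card_nbij' σ σ (fun x hx => ?_) (fun x hx => ?_) (fun x _ => hσ x) (fun x _ => hσ x)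
      <;> simp only [coe_filter, mem_univ, true_and, Set.mem_ofPred_eq, hg, hf] at hx ⊢
      <;> revert hx <;> cases g x <;> cases f x <;> decide
  rw [two_mul]
  nth_rw 2 [hswap]
  rw [card_filter_add_card_filter_not, card_univ]

noncomputable def agreement {n : ℕ} (g f : (Fin n → Bool) → Bool) : ℝ :=
  1 / 2 ^ n * ∑ x, if g x = f x then (1 : ℝ) else 0

section agreement

variable {n : ℕ}

theorem agreement_eq_card {g f : (Fin n → Bool) → Bool} :
    agreement g f = #{x | g x = f x} / 2 ^ n := by
  rw [agreement, sum_boole, one_div_mul_eq_div]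

theorem agreement_self (f : (Fin n → Bool) → Bool) : agreement f f = 1 := by
  simp [agreement_eq_card]

theorem agreement_nonneg (g f : (Fin n → Bool) → Bool) : 0 ≤ agreement g f := by
  rw [agreement_eq_card]
  positivity

theorem agreement_le_one (g f : (Fin n → Bool) → Bool) : agreement g f ≤ 1 := by
  rw [agreement_eq_card, div_le_one (by positivity)]
  exact_mod_cast (card_filter_le _ _).trans (by simp)

theorem agreement_eq_half_of_involutive {σ : (Fin n → Bool) → Fin n → Bool} (hσ : Involutive σ)
    {f g : (Fin n → Bool) → Bool} (hg : ∀ x, g (σ x) = g x) (hf : ∀ x, f (σ x) = !f x) :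
    agreement g f = 1 / 2 := by
  have hcard := two_mul_card_agree_of_involutive hσ hg hf
  simp only [Fintype.card_fun, Fintype.card_bool, Fintype.card_fin] at hcard
  rw [agreement_eq_card, div_eq_div_iff (by positivity) two_ne_zero, one_mul, mul_comm]
  exact_mod_cast hcard

end agreement

def flipAt {ι : Type*} [DecidableEq ι] (i : ι) (x : ι → Bool) : ι → Bool :=
  update x i (!x i)

section flipAt

variable {ι : Type*} [DecidableEq ι]

theorem flipAt_involutive (i : ι) : Involutive (flipAt i) := by
  intro x
  simp [flipAt]

@[simp]
theorem flipAt_apply_self (i : ι) (x : ι → Bool) : flipAt i x i = !x i :=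
  update_self _ _ _

theorem flipAt_apply_of_ne {i j : ι} (h : j ≠ i) (x : ι → Bool) : flipAt i x j = x j :=
  update_of_ne h _ _

end flipAt

theorem majOn_congr {n : ℕ} {S : Finset (Fin n)} {x y : Fin n → Bool}
    (h : ∀ i ∈ S, x i = y i) : majOn S x = majOn S y := by
  unfold majOn
  rw [filter_congr fun i hi => by rw [h i hi]]

theorem agreement_xor_majOn_eq_half {n : ℕ} {i : Fin n} {S : Finset (Fin n)} (hiS : i ∉ S)
    {g : (Fin n → Bool) → Bool} (hg : ∀ x, g (flipAt i x) = g x) :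
    agreement g (fun x => xor (x i) (majOn S x)) = 1 / 2 := by
  refine agreement_eq_half_of_involutive (flipAt_involutive i) hg fun x => ?_
  have hmaj : majOn S (flipAt i x) = majOn S x :=
    majOn_congr fun j hj => flipAt_apply_of_ne (ne_of_mem_of_not_mem hj hiS) x
  rw [hmaj, flipAt_apply_self, Bool.not_xor]

theorem accSPLIT_eq (d : ℕ) (hd : 1 ≤ d) (ε : ℝ) (g : (Fin (2 * d) → Bool) → Bool) :
    accSPLIT d hd ε g =
      (1 - ε) * agreement g (fun x => xor (x ⟨0, by omega⟩)
        (majOn {i : Fin (2 * d) | 1 ≤ i.val ∧ i.val ≤ d - 1} x)) +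
      ε * agreement g (majOn {i : Fin (2 * d) | d ≤ i.val}) := by
  simp only [accSPLIT, agreement, sum_add_distrib, ← mul_sum]
  ring

theorem stmt_13 (d : ℕ) (hd : 2 ≤ d) (ε : ℝ) (hε0 : 0 ≤ ε) :
    (1 - ε ≤ accSPLIT d (by omega) ε
        (fun x => xor (x ⟨0, by omega⟩)
          (majOn (Finset.univ.filter fun i : Fin (2 * d) => 1 ≤ i.val ∧ i.val ≤ d - 1) x))) ∧
    (∀ g : (Fin (2 * d) → Bool) → Bool,
      (∀ x x' : Fin (2 * d) → Bool,
          (∀ i : Fin (2 * d), d ≤ i.val → x i = x' i) → g x = g x') →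
      accSPLIT d (by omega) ε g
          = (1 - ε) / 2 + ε * ((1 / 2 ^ (2 * d)) * ∑ x : Fin (2 * d) → Bool,
              (if g x = majOn (Finset.univ.filter fun i : Fin (2 * d) => d ≤ i.val) x
                then (1 : ℝ) else 0))
        ∧ accSPLIT d (by omega) ε g ≤ 1 / 2 + ε / 2) := by
  refine ⟨?_, fun g hg => ?_⟩
  · rw [accSPLIT_eq, agreement_self, mul_one]
    exact le_add_of_nonneg_right (mul_nonneg hε0 (agreement_nonneg _ _))
  · have hhalf := agreement_xor_majOn_eq_half (i := ⟨0, by omega⟩)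
      (S := {i : Fin (2 * d) | 1 ≤ i.val ∧ i.val ≤ d - 1}) (by simp) (g := g)
      fun x => hg _ _ fun j hj =>
        flipAt_apply_of_ne (Fin.ne_of_val_ne (show j.val ≠ 0 by omega)) x
    have hacc : accSPLIT d (by omega) ε g =
        (1 - ε) / 2 + ε * agreement g (majOn {i : Fin (2 * d) | d ≤ i.val}) := by
      rw [accSPLIT_eq, hhalf]
      ring
    refine ⟨hacc, ?_⟩
    rw [hacc]
    linarith [mul_le_of_le_one_right hε0
      (agreement_le_one g (majOn {i : Fin (2 * d) | d ≤ i.val}))]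
end
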